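/- Suppose κ₂ > 0 and κ₄ > 0 (full connectivity). Then for the general mean-field system (λ^A, λ^B): (1) whatever the values of κ₁, κ₂, κ₃, κ₄, λ^A(t) does not tend to +∞ as t → ∞, i.e. liminf_{t→∞} λ^A(t) < ∞; (2) if λ^B(t) → +∞ as t → ∞, then λ^A(t) → 0 as t → ∞. -/

import Mathlib

/-!
If `λ^B → ∞`, then `‖h₂‖₁ > 0` makes `∫₀ᵗ h₂(t-u) λ^B(u) du → ∞`, so the inhibition factor
`Φ_{B→A}(…)` tends to `0`. The Lipschitz bound on `Φ_A` gives
`λ^A(t) ≤ (Φ_A(0) + C · max_{[0,t]} λ^A) · Φ_{B→A}(…)`; at a maximum point of `λ^A` on `[0, t]`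
lying beyond the time where `Φ_{B→A}(…)` is small, this caps the maximum, so `λ^A` is bounded and
then tends to `0`. If instead `λ^A → ∞`, then `‖h₄‖₁ > 0` makes the feedback term
`Φ_{A→B}(…)`, hence `λ^B`, tend to `∞`, and therefore `λ^A → 0`: a contradiction.
-/

open MeasureTheory Filter Topology Set
open scoped ENNReal

/-- Convolution term `∫₀ᵗ h(t-u) f(u) du`. -/
noncomputable def convK (h f : ℝ → ℝ) (t : ℝ) : ℝ :=
  ∫ u in (0:ℝ)..t, h (t - u) * f u

/-- `L¹` norm on `[0,∞)` of a kernel. -/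
noncomputable def l1 (h : ℝ → ℝ) : ℝ :=
  ∫ s in Set.Ioi (0:ℝ), h s

/-- A nonnegative measurable kernel with finite `L¹` norm on `[0,∞)`. -/
def KernelL1 (h : ℝ → ℝ) : Prop :=
  Measurable h ∧ (∀ u, 0 ≤ u → 0 ≤ h u) ∧ IntegrableOn h (Set.Ioi 0)

/-- A nonnegative integrable kernel vanishing at infinity. -/
def KernelOK (h : ℝ → ℝ) : Prop :=
  KernelL1 h ∧ Tendsto h atTop (𝓝 0)

/-- Properties of the inhibition kernel `Φ_{B→A}`. -/
def InhibOK (Φ : ℝ → ℝ) : Prop :=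
  (∃ K, 0 ≤ K ∧ ∀ x y, 0 ≤ x → 0 ≤ y → |Φ x - Φ y| ≤ K * |x - y|) ∧
  AntitoneOn Φ (Set.Ici 0) ∧ Φ 0 = 1 ∧
  (∀ x, 0 ≤ x → 0 ≤ Φ x ∧ Φ x ≤ 1) ∧
  Tendsto Φ atTop (𝓝 0)

/-- Properties of the feedback kernel `Φ_{A→B}`. -/
def FeedOK (Φ : ℝ → ℝ) : Prop :=
  (∃ K, 0 ≤ K ∧ ∀ x y, 0 ≤ x → 0 ≤ y → |Φ x - Φ y| ≤ K * |x - y|) ∧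
  MonotoneOn Φ (Set.Ici 0) ∧ Φ 0 = 0 ∧
  (∀ x, 0 ≤ x → 0 ≤ Φ x) ∧
  Tendsto Φ atTop atTop

/-- The general mean-field system of intensities. -/
def IsGenSys (α : ℝ) (h₁ h₂ h₃ h₄ ΦA ΦB ΦBA ΦAB lA lB : ℝ → ℝ) : Prop :=
  Continuous lA ∧ Continuous lB ∧ (∀ t, 0 ≤ lA t) ∧ (∀ t, 0 ≤ lB t) ∧
  (∀ t, 0 ≤ t →
    lA t = ΦA (α * convK h₁ lA t) * ΦBA ((1 - α) * convK h₂ lB t)) ∧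
  (∀ t, 0 ≤ t →
    lB t = ΦB ((1 - α) * convK h₃ lB t) + ΦAB (α * convK h₄ lA t))

/-- The linear mean-field system: `Φ_A(x) = μ_A + x` and `Φ_B(x) = μ_B + x`. -/
def IsLinSys (α : ℝ) (h₁ h₂ h₃ h₄ ΦBA ΦAB : ℝ → ℝ) (μA μB : ℝ)
    (lA lB : ℝ → ℝ) : Prop :=
  IsGenSys α h₁ h₂ h₃ h₄ (fun x => μA + x) (fun x => μB + x) ΦBA ΦAB lA lB

/-- `limsup_{t→∞} f(t)` with values in `[0,∞]`. -/
noncomputable def elimsup (f : ℝ → ℝ) : ℝ≥0∞ :=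
  Filter.limsup (fun t => ENNReal.ofReal (f t)) Filter.atTop

/-- `liminf_{t→∞} f(t)` with values in `[0,∞]`. -/
noncomputable def eliminf (f : ℝ → ℝ) : ℝ≥0∞ :=
  Filter.liminf (fun t => ENNReal.ofReal (f t)) Filter.atTop

/-- The domain `I_{κ₁,κ₂} = {x ≥ 0 : κ₁ Φ_{B→A}(κ₂ x) < 1}`. -/
def Idom (κ₁ κ₂ : ℝ) (ΦBA : ℝ → ℝ) : Set ℝ :=
  {x : ℝ | 0 ≤ x ∧ κ₁ * ΦBA (κ₂ * x) < 1}

/-- `Ψ₁(x) = μ_A Φ_{B→A}(κ₂x)/(1 - κ₁Φ_{B→A}(κ₂x))`. -/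
noncomputable def Psi1 (μA κ₁ κ₂ : ℝ) (ΦBA : ℝ → ℝ) (x : ℝ) : ℝ :=
  μA * ΦBA (κ₂ * x) / (1 - κ₁ * ΦBA (κ₂ * x))

/-- `Ψ₂(x) = (μ_B + Φ_{A→B}(κ₄x))/(1-κ₃)`. -/
noncomputable def Psi2 (μB κ₃ κ₄ : ℝ) (ΦAB : ℝ → ℝ) (x : ℝ) : ℝ :=
  (μB + ΦAB (κ₄ * x)) / (1 - κ₃)

/-- The fixed-point map `Φ = Ψ₂ ∘ Ψ₁`. -/
noncomputable def PhiMap (μA μB κ₁ κ₂ κ₃ κ₄ : ℝ) (ΦBA ΦAB : ℝ → ℝ) (x : ℝ) : ℝ :=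
  Psi2 μB κ₃ κ₄ ΦAB (Psi1 μA κ₁ κ₂ ΦBA x)

/-- The set `U_Φ` of admissible pairs `(u,v)`. -/
def UPhi (μA μB κ₁ κ₂ κ₃ κ₄ : ℝ) (ΦBA ΦAB : ℝ → ℝ) (ℓ : ℝ) : Set (ℝ × ℝ) :=
  {p : ℝ × ℝ | p.1 ∈ Idom κ₁ κ₂ ΦBA ∧ p.2 ∈ Idom κ₁ κ₂ ΦBA ∧
    PhiMap μA μB κ₁ κ₂ κ₃ κ₄ ΦBA ΦAB p.2 ≤ p.1 ∧ p.1 ≤ ℓ ∧ ℓ ≤ p.2 ∧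
    p.2 ≤ PhiMap μA μB κ₁ κ₂ κ₃ κ₄ ΦBA ΦAB p.1 ∧ μB / (1 - κ₃) ≤ p.1}

namespace KernelL1

variable {h : ℝ → ℝ}

lemma l1_nonneg (hK : KernelL1 h) : 0 ≤ l1 h :=
  setIntegral_nonneg measurableSet_Ioi fun u hu => hK.2.1 u hu.le

lemma intervalIntegrable (hK : KernelL1 h) {t : ℝ} (ht : 0 ≤ t) :
    IntervalIntegrable h volume 0 t :=
  (intervalIntegrable_iff_integrableOn_Ioc_of_le ht).mpr
    (hK.2.2.mono_set Ioc_subset_Ioi_self)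

lemma integral_le_l1 (hK : KernelL1 h) {t : ℝ} (ht : 0 ≤ t) :
    ∫ s in (0:ℝ)..t, h s ≤ l1 h := by
  rw [intervalIntegral.integral_of_le ht]
  exact setIntegral_mono_set hK.2.2
    ((ae_restrict_iff' measurableSet_Ioi).mpr (ae_of_all _ fun u hu => hK.2.1 u hu.le))
    Ioc_subset_Ioi_self.eventuallyLE

lemma exists_integral_pos (hK : KernelL1 h) (hl1 : 0 < l1 h) :
    ∃ n, 0 ≤ n ∧ 0 < ∫ s in (0:ℝ)..n, h s :=
  ((intervalIntegral_tendsto_integral_Ioi 0 hK.2.2 tendsto_id).eventually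
    (eventually_gt_nhds hl1) |>.and (eventually_ge_atTop 0)).exists.imp fun _ hn => ⟨hn.2, hn.1⟩

end KernelL1

lemma convK_eq_integral_mul_sub (h f : ℝ → ℝ) (t : ℝ) :
    convK h f t = ∫ s in (0:ℝ)..t, h s * f (t - s) := by
  unfold convK
  simpa using intervalIntegral.integral_comp_sub_left (fun s => h s * f (t - s)) t (a := 0) (b := t)

section Convolution

variable {h f : ℝ → ℝ}

lemma convK_nonneg (hK : KernelL1 h) (hf : ∀ u, 0 ≤ f u) {t : ℝ} (ht : 0 ≤ t) :
    0 ≤ convK h f t :=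
  intervalIntegral.integral_nonneg ht fun u hu =>
    mul_nonneg (hK.2.1 _ (by linarith [hu.2])) (hf u)

lemma intervalIntegrable_mul_sub (hK : KernelL1 h) (hf : Continuous f) (t : ℝ) {b : ℝ}
    (hb : 0 ≤ b) : IntervalIntegrable (fun s => h s * f (t - s)) volume 0 b :=
  (hK.intervalIntegrable hb).mul_continuousOn (hf.comp (continuous_sub_left t)).continuousOn

lemma convK_le (hK : KernelL1 h) (hf : Continuous f) {t S : ℝ} (ht : 0 ≤ t) (hS : 0 ≤ S)
    (hfS : ∀ u ∈ Icc 0 t, f u ≤ S) :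
    convK h f t ≤ S * l1 h := by
  rw [convK_eq_integral_mul_sub]
  calc ∫ s in (0:ℝ)..t, h s * f (t - s)
      ≤ ∫ s in (0:ℝ)..t, h s * S :=
        intervalIntegral.integral_mono_on ht (intervalIntegrable_mul_sub hK hf t ht)
          ((hK.intervalIntegrable ht).mul_const S) fun s hs =>
            mul_le_mul_of_nonneg_left (hfS _ ⟨by linarith [hs.2], by linarith [hs.1]⟩)
              (hK.2.1 s hs.1)
    _ = S * ∫ s in (0:ℝ)..t, h s := by rw [intervalIntegral.integral_mul_const, mul_comm]
    _ ≤ S * l1 h := mul_le_mul_of_nonneg_left (hK.integral_le_l1 ht) hS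

lemma mul_integral_le_convK (hK : KernelL1 h) (hf : Continuous f) (hf0 : ∀ u, 0 ≤ f u)
    {K n t : ℝ} (hn : 0 ≤ n) (hnt : n ≤ t) (hfK : ∀ u ∈ Icc (t - n) t, K ≤ f u) :
    K * ∫ s in (0:ℝ)..n, h s ≤ convK h f t := by
  have ht : 0 ≤ t := hn.trans hnt
  rw [convK_eq_integral_mul_sub, ← intervalIntegral.integral_const_mul]
  calc ∫ s in (0:ℝ)..n, K * h s
      ≤ ∫ s in (0:ℝ)..n, h s * f (t - s) :=
        intervalIntegral.integral_mono_on hn ((hK.intervalIntegrable hn).const_mul K)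
          (intervalIntegrable_mul_sub hK hf t hn) fun s hs => by
            rw [mul_comm]
            exact mul_le_mul_of_nonneg_left (hfK _ ⟨by linarith [hs.2], by linarith [hs.1]⟩)
              (hK.2.1 s hs.1)
    _ ≤ ∫ s in (0:ℝ)..t, h s * f (t - s) :=
        intervalIntegral.integral_mono_interval le_rfl hn hnt
          ((ae_restrict_iff' measurableSet_Ioc).mpr (ae_of_all _ fun s hs =>
            mul_nonneg (hK.2.1 s hs.1.le) (hf0 _)))
          (intervalIntegrable_mul_sub hK hf t ht)

lemma tendsto_convK_atTop (hK : KernelL1 h) (hf : Continuous f) (hf0 : ∀ u, 0 ≤ f u)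
    (hl1 : 0 < l1 h) (hftop : Tendsto f atTop atTop) :
    Tendsto (convK h f) atTop atTop := by
  obtain ⟨n, hn, hpos⟩ := hK.exists_integral_pos hl1
  refine tendsto_atTop.mpr fun M => ?_
  obtain ⟨T, hT⟩ := eventually_atTop.mp (tendsto_atTop.mp hftop (M / ∫ s in (0:ℝ)..n, h s))
  filter_upwards [eventually_ge_atTop (max T 0 + n)] with t ht
  calc M = M / (∫ s in (0:ℝ)..n, h s) * ∫ s in (0:ℝ)..n, h s := (div_mul_cancel₀ _ hpos.ne').symm
    _ ≤ convK h f t :=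
      mul_integral_le_convK hK hf hf0 hn (by linarith [le_max_right T 0]) fun u hu => hT u (by linarith [hu.1, le_max_left T 0])

end Convolution

section RunningMax

variable {f ε : ℝ → ℝ} {a C : ℝ}

lemma exists_bound_of_le_runningMax_mul (hf : Continuous f) (hf0 : ∀ t, 0 ≤ f t) (ha : 0 ≤ a)
    (hC : 0 ≤ C) (hε : Tendsto ε atTop (𝓝 0))
    (hle : ∀ t B, 0 ≤ t → 0 ≤ B → (∀ u ∈ Icc 0 t, f u ≤ B) → f t ≤ (a + C * B) * ε t) :
    ∃ B, 0 ≤ B ∧ ∀ t, 0 ≤ t → f t ≤ B := by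
  -- at a maximum point `s ≥ T` of `f` on `[0, t]`, `f s ≤ (a + C f s) η` forces `f s ≤ 1`
  set η := 1 / (2 * (a + C + 1))
  obtain ⟨T, hT⟩ := eventually_atTop.mp (hε.eventually (eventually_lt_nhds (by positivity : 0 < η)))
  obtain ⟨B₀, hB₀⟩ := (isCompact_Icc (a := 0) (b := T)).exists_bound_of_continuousOn hf.continuousOn
  refine ⟨max B₀ 1, by positivity, fun t ht => ?_⟩
  obtain ⟨s, hs, hmax⟩ := isCompact_Icc.exists_isMaxOn ⟨t, ⟨ht, le_rfl⟩⟩ hf.continuousOn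
  have hts : f t ≤ f s := hmax ⟨ht, le_rfl⟩
  rcases le_or_gt s T with hsT | hTs
  · have := (le_abs_self _).trans (hB₀ s ⟨hs.1, hsT⟩)
    linarith [le_max_left B₀ 1]
  · have hfs : f s ≤ (a + C * f s) * η :=
      (hle s (f s) hs.1 (hf0 s) fun u hu => hmax ⟨hu.1, hu.2.trans hs.2⟩).trans
        (mul_le_mul_of_nonneg_left (hT s hTs.le).le (by nlinarith [hf0 s]))
    have : f s * (2 * (a + C + 1)) ≤ a + C * f s := by
      rwa [← le_div_iff₀ (by positivity), ← mul_one_div]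
    nlinarith [hf0 s, le_max_right B₀ 1]

lemma tendsto_zero_of_le_runningMax_mul (hf : Continuous f) (hf0 : ∀ t, 0 ≤ f t) (ha : 0 ≤ a)
    (hC : 0 ≤ C) (hε : Tendsto ε atTop (𝓝 0))
    (hle : ∀ t B, 0 ≤ t → 0 ≤ B → (∀ u ∈ Icc 0 t, f u ≤ B) → f t ≤ (a + C * B) * ε t) :
    Tendsto f atTop (𝓝 0) := by
  obtain ⟨B, hB0, hB⟩ := exists_bound_of_le_runningMax_mul hf hf0 ha hC hε hle
  refine squeeze_zero' (.of_forall hf0) ?_ (by simpa using hε.const_mul (a + C * B))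
  filter_upwards [eventually_ge_atTop 0] with t ht
  exact hle t B ht hB0 fun u hu => hB u hu.1

end RunningMax

lemma tendsto_atTop_of_eliminf_eq_top {f : ℝ → ℝ} (hf : eliminf f = ⊤) :
    Tendsto f atTop atTop :=
  ENNReal.tendsto_ofReal_nhds_top.mp (tendsto_of_le_liminf_of_limsup_le hf.ge le_top)

namespace IsGenSys

variable {α : ℝ} {h₁ h₂ h₃ h₄ ΦA ΦB ΦBA ΦAB lA lB : ℝ → ℝ}

lemma lA_le_runningMax_mul (hsys : IsGenSys α h₁ h₂ h₃ h₄ ΦA ΦB ΦBA ΦAB lA lB)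
    (hα0 : 0 ≤ α) (hα1 : α ≤ 1) (hh₁ : KernelL1 h₁) (hh₂ : KernelL1 h₂)
    (hΦBA0 : ∀ x, 0 ≤ x → 0 ≤ ΦBA x) {LA : ℝ} (hLA : 0 ≤ LA)
    (hΦAlip : ∀ x y, 0 ≤ x → 0 ≤ y → |ΦA x - ΦA y| ≤ LA * |x - y|)
    (t B : ℝ) (ht : 0 ≤ t) (hB : 0 ≤ B) (hlAB : ∀ u ∈ Icc 0 t, lA u ≤ B) :
    lA t ≤ (ΦA 0 + LA * (α * l1 h₁) * B) * ΦBA ((1 - α) * convK h₂ lB t) := by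
  obtain ⟨hcA, -, hA0, hB0, hlA, -⟩ := hsys
  set x := α * convK h₁ lA t
  have hx : 0 ≤ x := mul_nonneg hα0 (convK_nonneg hh₁ hA0 ht)
  have hΦAx : ΦA x ≤ ΦA 0 + LA * x := by
    have := (le_abs_self _).trans (hΦAlip x 0 hx le_rfl)
    rw [sub_zero, abs_of_nonneg hx] at this
    linarith
  have hxB : LA * x ≤ LA * (α * l1 h₁) * B := by
    have := mul_le_mul_of_nonneg_left (convK_le hh₁ hcA ht hB hlAB) hα0
    nlinarith
  rw [hlA t ht]
  exact mul_le_mul_of_nonneg_right (by linarith)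
    (hΦBA0 _ (mul_nonneg (by linarith) (convK_nonneg hh₂ hB0 ht)))

lemma tendsto_lA_zero (hsys : IsGenSys α h₁ h₂ h₃ h₄ ΦA ΦB ΦBA ΦAB lA lB)
    (hα0 : 0 ≤ α) (hα1 : α < 1) (hh₁ : KernelL1 h₁) (hh₂ : KernelL1 h₂) (hl2 : 0 < l1 h₂)
    (hΦBA0 : ∀ x, 0 ≤ x → 0 ≤ ΦBA x) (hΦBA : Tendsto ΦBA atTop (𝓝 0))
    (hΦA0 : 0 ≤ ΦA 0) {LA : ℝ} (hLA : 0 ≤ LA)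
    (hΦAlip : ∀ x y, 0 ≤ x → 0 ≤ y → |ΦA x - ΦA y| ≤ LA * |x - y|)
    (hlB : Tendsto lB atTop atTop) :
    Tendsto lA atTop (𝓝 0) := by
  have hconv : Tendsto (fun t => (1 - α) * convK h₂ lB t) atTop atTop :=
    (tendsto_convK_atTop hh₂ hsys.2.1 hsys.2.2.2.1 hl2 hlB).const_mul_atTop (by linarith)
  exact tendsto_zero_of_le_runningMax_mul hsys.1 hsys.2.2.1 hΦA0
    (mul_nonneg hLA (mul_nonneg hα0 hh₁.l1_nonneg)) (hΦBA.comp hconv)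
    (hsys.lA_le_runningMax_mul hα0 hα1.le hh₁ hh₂ hΦBA0 hLA hΦAlip)

lemma tendsto_lB_atTop (hsys : IsGenSys α h₁ h₂ h₃ h₄ ΦA ΦB ΦBA ΦAB lA lB)
    (hα0 : 0 < α) (hα1 : α ≤ 1) (hh₃ : KernelL1 h₃) (hh₄ : KernelL1 h₄) (hl4 : 0 < l1 h₄)
    (hΦB0 : ∀ x, 0 ≤ x → 0 ≤ ΦB x) (hΦAB : Tendsto ΦAB atTop atTop)
    (hlA : Tendsto lA atTop atTop) :
    Tendsto lB atTop atTop := by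
  obtain ⟨hcA, -, hA0, hB0, -, hlB⟩ := hsys
  refine tendsto_atTop_mono' atTop ?_
    (hΦAB.comp ((tendsto_convK_atTop hh₄ hcA hA0 hl4 hlA).const_mul_atTop hα0))
  filter_upwards [eventually_ge_atTop 0] with t ht
  rw [hlB t ht]
  exact le_add_of_nonneg_left (hΦB0 _ (mul_nonneg (by linarith) (convK_nonneg hh₃ hB0 ht)))

end IsGenSys

theorem stmt5_general
    (α : ℝ) (hα : α ∈ Set.Ioo (0:ℝ) 1)
    (h₁ h₂ h₃ h₄ : ℝ → ℝ)
    (hh₁ : KernelOK h₁) (hh₂ : KernelOK h₂) (hh₃ : KernelOK h₃) (hh₄ : KernelOK h₄)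
    (κ₂ κ₄ : ℝ)
    (hκ₂ : κ₂ = (1 - α) * l1 h₂)
    (hκ₄ : κ₄ = α * l1 h₄)
    (ΦBA ΦAB : ℝ → ℝ) (hBA : InhibOK ΦBA) (hAB : FeedOK ΦAB)
    (ΦA ΦB : ℝ → ℝ) (LA : ℝ) (hLA : 0 ≤ LA)
    (hΦApos : ∀ x, 0 ≤ x → 0 ≤ ΦA x) (hΦBpos : ∀ x, 0 ≤ x → 0 ≤ ΦB x)
    (hΦAlip : ∀ x y, 0 ≤ x → 0 ≤ y → |ΦA x - ΦA y| ≤ LA * |x - y|)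
    (hk2 : 0 < κ₂) (hk4 : 0 < κ₄) :
    ∀ lA lB, IsGenSys α h₁ h₂ h₃ h₄ ΦA ΦB ΦBA ΦAB lA lB →
      eliminf lA < ⊤ ∧
      (Tendsto lB atTop atTop → Tendsto lA atTop (𝓝 0)) := by
  intro lA lB hsys
  obtain ⟨hα0, hα1⟩ := hα
  have hl2 : 0 < l1 h₂ := pos_of_mul_pos_right (hκ₂ ▸ hk2) (by linarith)
  have hl4 : 0 < l1 h₄ := pos_of_mul_pos_right (hκ₄ ▸ hk4) hα0.le
  have hlA_zero : Tendsto lB atTop atTop → Tendsto lA atTop (𝓝 0) :=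
    hsys.tendsto_lA_zero hα0.le hα1 hh₁.1 hh₂.1 hl2 (fun x hx => (hBA.2.2.2.1 x hx).1)
      hBA.2.2.2.2 (hΦApos 0 le_rfl) hLA hΦAlip
  refine ⟨lt_top_iff_ne_top.mpr fun htop => ?_, hlA_zero⟩
  have hlA_top := tendsto_atTop_of_eliminf_eq_top htop
  exact not_tendsto_atTop_of_tendsto_nhds
    (hlA_zero (hsys.tendsto_lB_atTop hα0 hα1.le hh₃.1 hh₄.1 hl4 hΦBpos hAB.2.2.2.2 hlA_top))
    hlA_top

/-- Full connectivity, general system: population A cannot be supercritical;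
if B diverges then A vanishes. -/
theorem stmt5
    (α : ℝ) (hα : α ∈ Set.Ioo (0:ℝ) 1)
    (h₁ h₂ h₃ h₄ : ℝ → ℝ)
    (hh₁ : KernelOK h₁) (hh₂ : KernelOK h₂) (hh₃ : KernelOK h₃) (hh₄ : KernelOK h₄)
    (κ₁ κ₂ κ₃ κ₄ : ℝ)
    (hκ₁ : κ₁ = α * l1 h₁) (hκ₂ : κ₂ = (1 - α) * l1 h₂)
    (hκ₃ : κ₃ = (1 - α) * l1 h₃) (hκ₄ : κ₄ = α * l1 h₄)
    (ΦBA ΦAB : ℝ → ℝ) (hBA : InhibOK ΦBA) (hAB : FeedOK ΦAB)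
    (ΦA ΦB : ℝ → ℝ) (LA LB : ℝ) (hLA : 0 ≤ LA) (hLB : 0 ≤ LB)
    (hΦApos : ∀ x, 0 ≤ x → 0 ≤ ΦA x) (hΦBpos : ∀ x, 0 ≤ x → 0 ≤ ΦB x)
    (hΦAlip : ∀ x y, 0 ≤ x → 0 ≤ y → |ΦA x - ΦA y| ≤ LA * |x - y|)
    (hΦBlip : ∀ x y, 0 ≤ x → 0 ≤ y → |ΦB x - ΦB y| ≤ LB * |x - y|)
    (hk2 : 0 < κ₂) (hk4 : 0 < κ₄) :
    ∀ lA lB, IsGenSys α h₁ h₂ h₃ h₄ ΦA ΦB ΦBA ΦAB lA lB →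
      eliminf lA < ⊤ ∧
      (Tendsto lB atTop atTop → Tendsto lA atTop (𝓝 0)) :=
  stmt5_general α hα h₁ h₂ h₃ h₄ hh₁ hh₂ hh₃ hh₄ κ₂ κ₄ hκ₂ hκ₄ ΦBA ΦAB hBA hAB ΦA ΦB LA hLA hΦApos
    hΦBpos hΦAlip hk2 hk4
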